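/- arXiv:2307.05043 — 2 statements merged into one kernel-verified Lean document; each statement's English description precedes it below -/
import Mathlib

section
/- Existence Lemma for the canonical model for existential formulas: for every world w of M^E, every m ∈ ℕ, every agent i, and every term t such that ¬K_i t ∈ w(m), there exists a world w' of M^E such that w R^E_i w' and ¬t ∈ w'(m). -/
/-- Terms of the language L_NES: `g ::= A | K_i g | ¬g`. -/
inductive NesTerm (U I : Type) : Type
  | base : U → NesTerm U I
  | know : I → NesTerm U I → NesTerm U I
  | neg  : NesTerm U I → NesTerm U I

/-- Formulas of L_NES: `All g1 are g2` and `Some g1 is g2`. -/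
inductive NesForm (U I : Type) : Type
  | all : NesTerm U I → NesTerm U I → NesForm U I
  | ex  : NesTerm U I → NesTerm U I → NesForm U I

/-- The (defined) negation of an L_NES formula. -/
def NesForm.negf {U I : Type} : NesForm U I → NesForm U I
  | .all g1 g2 => .ex g1 (.neg g2)
  | .ex g1 g2 => .all g1 (.neg g2)

/-- Derivability in T_NES augmented with a set `extra` of additional axioms
(`extra = ∅` gives T_NES itself). -/
inductive NesDer {U I : Type} (extra : Set (NesForm U I)) :
    Set (NesForm U I) → NesForm U I → Prop
  | prem {Γ φ} : φ ∈ Γ → NesDer extra Γ φ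
  | extraAx {Γ φ} : φ ∈ extra → NesDer extra Γ φ
  | allSelf {Γ} (g : NesTerm U I) : NesDer extra Γ (.all g g)
  | tAx {Γ} (i : I) (g : NesTerm U I) : NesDer extra Γ (.all (.know i g) g)
  | dni {Γ} (g : NesTerm U I) : NesDer extra Γ (.all g (.neg (.neg g)))
  | dne {Γ} (g : NesTerm U I) : NesDer extra Γ (.all (.neg (.neg g)) g)
  | barbara {Γ g1 g2 g3} : NesDer extra Γ (.all g1 g2) → NesDer extra Γ (.all g2 g3) →
      NesDer extra Γ (.all g1 g3)
  | conv {Γ g1 g2} : NesDer extra Γ (.ex g1 g2) → NesDer extra Γ (.ex g2 g1)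
  | exist {Γ g1 g2} : NesDer extra Γ (.ex g1 g2) → NesDer extra Γ (.ex g1 g1)
  | nonEmpty {Γ g} : NesDer extra Γ (.all g (.neg g)) →
      NesDer extra Γ (.ex (.neg g) (.neg g))
  | raa {Γ φ ψ} : NesDer extra (insert φ Γ) ψ → NesDer extra (insert φ Γ) ψ.negf →
      NesDer extra Γ φ.negf
  | kRule {Γ g1 g2} (i : I) : NesDer extra (∅ : Set (NesForm U I)) (.all g1 g2) →
      NesDer extra Γ (.all (.know i g1) (.know i g2))

/-- Derivability in the system T_NES. -/
def TNes {U I : Type} : Set (NesForm U I) → NesForm U I → Prop := NesDer ∅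

/-- The extra axioms of S4_NES: `All K_i g are K_i K_i g`. -/
def S4Extra (U I : Type) : Set (NesForm U I) :=
  {φ | ∃ (i : I) (g : NesTerm U I), φ = .all (.know i g) (.know i (.know i g))}

/-- The extra axioms of S5_NES: those of S4_NES plus `All ¬K_i g are K_i ¬K_i g`. -/
def S5Extra (U I : Type) : Set (NesForm U I) :=
  S4Extra U I ∪ {φ | ∃ (i : I) (g : NesTerm U I),
    φ = .all (.neg (.know i g)) (.know i (.neg (.know i g)))}

/-- Derivability in the system S4_NES. -/
def S4Nes {U I : Type} : Set (NesForm U I) → NesForm U I → Prop := NesDer (S4Extra U I)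

/-- Derivability in the system S5_NES. -/
def S5Nes {U I : Type} : Set (NesForm U I) → NesForm U I → Prop := NesDer (S5Extra U I)

/-- A first-order Kripke model for L_NES with constant (nonempty) domain. -/
structure NesModel (U I : Type) where
  W : Type
  R : I → W → W → Prop
  D : Type
  dNonempty : Nonempty D
  val : W → U → Set D

/-- Interpretation of terms: `ρ⁺_w(A) = ρ_w(A)`, `ρ⁺_w(¬g) = D − ρ⁺_w(g)`,
`ρ⁺_w(K_i g) = ⋂_{w R_i v} ρ⁺_v(g)`. -/
def NesModel.interp {U I : Type} (M : NesModel U I) : M.W → NesTerm U I → Set M.D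
  | w, .base A => M.val w A
  | w, .know i g => {d | ∀ v, M.R i w v → d ∈ NesModel.interp M v g}
  | w, .neg g => (NesModel.interp M w g)ᶜ

/-- Satisfaction of L_NES formulas at a pointed model. -/
def NesModel.sat {U I : Type} (M : NesModel U I) (w : M.W) : NesForm U I → Prop
  | .all g1 g2 => M.interp w g1 ⊆ M.interp w g2
  | .ex g1 g2 => (M.interp w g1 ∩ M.interp w g2).Nonempty

/-- A pointed model satisfies a set of formulas. -/
def NesModel.satSet {U I : Type} (M : NesModel U I) (w : M.W)
    (Γ : Set (NesForm U I)) : Prop :=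
  ∀ φ ∈ Γ, M.sat w φ

/-- T models: every accessibility relation is reflexive. -/
def NesModel.IsT {U I : Type} (M : NesModel U I) : Prop := ∀ i, Reflexive (M.R i)

/-- S4 models: every accessibility relation is reflexive and transitive. -/
def NesModel.IsS4 {U I : Type} (M : NesModel U I) : Prop :=
  ∀ i, Reflexive (M.R i) ∧ Transitive (M.R i)

/-- S5 models: every accessibility relation is an equivalence relation. -/
def NesModel.IsS5 {U I : Type} (M : NesModel U I) : Prop := ∀ i, Equivalence (M.R i)

/-- A type: a set X of terms that respects provable Barbara, and contains exactly
one of g, ¬g for every term g. -/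
def IsType {U I : Type} (X : Set (NesTerm U I)) : Prop :=
  (∀ g1 g2 : NesTerm U I, g1 ∈ X → TNes (∅ : Set (NesForm U I)) (.all g1 g2) → g2 ∈ X) ∧
  (∀ g : NesTerm U I, g ∈ X ∨ NesTerm.neg g ∈ X) ∧
  (∀ g : NesTerm U I, ¬ (g ∈ X ∧ NesTerm.neg g ∈ X))

/-- A possible collection of terms: no two members provably exclude each other. -/
def IsPossible {U I : Type} (Y : Set (NesTerm U I)) : Prop :=
  ∀ g1 g2 : NesTerm U I, g1 ∈ Y → g2 ∈ Y →
    ¬ TNes (∅ : Set (NesForm U I)) (.all g1 (.neg g2))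

/-- Worlds of the canonical model for existential formulas: maps from ℕ to types. -/
def WE (U I : Type) : Type := ℕ → {X : Set (NesTerm U I) // IsType X}

/-- Accessibility in the canonical model for existential formulas:
w R^E_i w' iff K_i g ∈ w(n) implies g ∈ w'(n), for all n and g. -/
def RE {U I : Type} (i : I) (w w' : WE U I) : Prop :=
  ∀ (n : ℕ) (g : NesTerm U I), NesTerm.know i g ∈ (w n).1 → g ∈ (w' n).1

section Aux

open NesTerm NesForm

variable {U I : Type}

/-- Weakening. -/
lemma NesDer.weaken {extra : Set (NesForm U I)} {Γ Γ' : Set (NesForm U I)} {φ : NesForm U I}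
    (h : NesDer extra Γ φ) (hsub : Γ ⊆ Γ') : NesDer extra Γ' φ := by
  induction h generalizing Γ' with
  | prem hφ => exact .prem (hsub hφ)
  | extraAx hφ => exact .extraAx hφ
  | allSelf g => exact .allSelf g
  | tAx i g => exact .tAx i g
  | dni g => exact .dni g
  | dne g => exact .dne g
  | barbara h1 h2 ih1 ih2 => exact .barbara (ih1 hsub) (ih2 hsub)
  | conv h ih => exact .conv (ih hsub)
  | exist h ih => exact .exist (ih hsub)
  | nonEmpty h ih => exact .nonEmpty (ih hsub)
  | raa h1 h2 ih1 ih2 =>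
      exact .raa (ih1 (Set.insert_subset_insert hsub)) (ih2 (Set.insert_subset_insert hsub))
  | kRule i h _ => exact .kRule i h

/-- Contraposition is derivable. -/
lemma TNes.contrap {a b : NesTerm U I}
    (h : TNes (∅ : Set (NesForm U I)) (.all a b)) :
    TNes (∅ : Set (NesForm U I)) (.all (.neg b) (.neg a)) := by
  have h1 : NesDer (∅ : Set (NesForm U I)) (insert (NesForm.ex (.neg b) a) ∅)
      (NesForm.ex a (.neg b)) := .conv (.prem (Set.mem_insert _ _))
  have h2 : NesDer (∅ : Set (NesForm U I)) (insert (NesForm.ex (.neg b) a) ∅)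
      (NesForm.ex a (.neg b)).negf := by
    show NesDer _ _ (NesForm.all a (.neg (.neg b)))
    exact .barbara (NesDer.weaken h (by intro x hx; exact absurd hx (Set.notMem_empty _)))
      (.dni b)
  exact NesDer.raa h1 h2

/-- From `All a are ¬b` derive `All b are ¬a`. -/
lemma TNes.flip {a b : NesTerm U I}
    (h : TNes (∅ : Set (NesForm U I)) (.all a (.neg b))) :
    TNes (∅ : Set (NesForm U I)) (.all b (.neg a)) :=
  NesDer.barbara (NesDer.dni b) (TNes.contrap h)

lemma NesModel.sat_negf (M : NesModel U I) (w : M.W) (φ : NesForm U I) :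
    M.sat w φ.negf ↔ ¬ M.sat w φ := by
  cases φ with
  | all g1 g2 =>
      show (M.interp w g1 ∩ (M.interp w g2)ᶜ).Nonempty ↔ ¬ M.interp w g1 ⊆ M.interp w g2
      rw [Set.not_subset]
      constructor
      · rintro ⟨d, h1, h2⟩; exact ⟨d, h1, h2⟩
      · rintro ⟨d, h1, h2⟩; exact ⟨d, h1, h2⟩
  | ex g1 g2 =>
      show M.interp w g1 ⊆ (M.interp w g2)ᶜ ↔ ¬ (M.interp w g1 ∩ M.interp w g2).Nonempty
      constructor
      · rintro hsub ⟨d, h1, h2⟩; exact hsub h1 h2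
      · intro hne d hd hd2; exact hne ⟨d, hd, hd2⟩

/-- Soundness of T_NES over reflexive models. -/
lemma TNes.sound {Γ : Set (NesForm U I)} {φ : NesForm U I}
    (h : NesDer (∅ : Set (NesForm U I)) Γ φ)
    (M : NesModel U I) (hM : M.IsT) : ∀ w : M.W, M.satSet w Γ → M.sat w φ := by
  induction h with
  | prem hφ => intro w hΓ; exact hΓ _ hφ
  | extraAx hφ => exact absurd hφ (Set.notMem_empty _)
  | allSelf g => intro w _; exact fun d hd => hd
  | tAx i g => intro w _; exact fun d hd => hd w (hM i w)
  | dni g => intro w _; intro d hd; exact fun hc => hc hd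
  | dne g => intro w _; intro d hd; exact not_not.mp hd
  | barbara h1 h2 ih1 ih2 =>
      intro w hΓ; exact Set.Subset.trans (ih1 w hΓ) (ih2 w hΓ)
  | conv h ih =>
      intro w hΓ; obtain ⟨d, h1, h2⟩ := ih w hΓ; exact ⟨d, h2, h1⟩
  | exist h ih =>
      intro w hΓ; obtain ⟨d, h1, _⟩ := ih w hΓ; exact ⟨d, h1, h1⟩
  | nonEmpty h ih =>
      intro w hΓ
      obtain ⟨d⟩ := M.dNonempty
      refine ⟨d, fun hd => ih w hΓ hd hd, fun hd => ih w hΓ hd hd⟩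
  | @raa Γ0 φ0 ψ0 h1 h2 ih1 ih2 =>
      intro w hΓ
      rw [M.sat_negf]
      intro hφ
      have hΓ' : M.satSet w (insert φ0 Γ0) := by
        intro ψ hψ
        rcases Set.mem_insert_iff.mp hψ with h | h
        · subst h; exact hφ
        · exact hΓ _ h
      have := ih2 w hΓ'
      rw [M.sat_negf] at this
      exact this (ih1 w hΓ')
  | kRule i h ih =>
      intro w _
      intro d hd v hv
      exact ih v (fun ψ hψ => absurd hψ (Set.notMem_empty _)) (hd v hv)

/-- Parity of negations in a term. -/
def NesTerm.pol : NesTerm U I → Bool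
  | .base _ => false
  | .know _ g => pol g
  | .neg g => !pol g

/-- No term is provably empty. -/
lemma not_all_neg_self (g : NesTerm U I) :
    ¬ TNes (∅ : Set (NesForm U I)) (.all g (.neg g)) := by
  intro h
  set c : Set Unit := if g.pol then ∅ else Set.univ with hc
  let M : NesModel U I :=
    { W := Unit, R := fun _ _ _ => True, D := Unit, dNonempty := ⟨()⟩,
      val := fun _ _ => c }
  have hM : M.IsT := fun i x => trivial
  have key : ∀ (h' : NesTerm U I) (w : Unit),
      M.interp w h' = if h'.pol then cᶜ else c := by
    intro h'
    induction h' with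
    | base A => intro w; simp [NesModel.interp, NesTerm.pol, M]
    | know j g' ih =>
        intro w
        show {d | ∀ v : Unit, True → d ∈ M.interp v g'} = _
        rw [show (if (NesTerm.know j g').pol then cᶜ else c) = if g'.pol then cᶜ else c from rfl]
        ext d
        simp only [Set.mem_setOf_eq, forall_const]
        rw [show (∀ _ : Unit, d ∈ M.interp () g') ↔ d ∈ M.interp () g' by
          exact ⟨fun hh => hh (), fun hh _ => hh⟩]
        rw [ih ()]
    | neg g' ih =>
        intro w
        show (M.interp w g')ᶜ = if (NesTerm.neg g').pol then cᶜ else c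
        rw [ih w]
        cases hp : g'.pol
        · simp [NesTerm.pol, hp]
        · simp [NesTerm.pol, hp]
  have hg : M.interp () g = Set.univ := by
    rw [key g ()]
    cases hp : g.pol <;> simp [hc, hp]
  have hs := TNes.sound h M hM () (fun ψ hψ => absurd hψ (Set.notMem_empty _))
  have h1 : () ∈ M.interp () g := by rw [hg]; trivial
  have h2 := hs h1
  exact h2 h1

/-- Every possible set extends to a type. -/
lemma exists_type_ext {Y : Set (NesTerm U I)} (hY : IsPossible Y) :
    ∃ X : Set (NesTerm U I), Y ⊆ X ∧ IsType X := by
  obtain ⟨X, hYX, hXmax⟩ :=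
    zorn_subset_nonempty {Z : Set (NesTerm U I) | IsPossible Z} (by
      intro c hcS hchain hcne
      refine ⟨⋃₀ c, ?_, fun s hs => Set.subset_sUnion_of_mem hs⟩
      intro g1 g2 hg1 hg2 hder
      obtain ⟨s, hs, hg1s⟩ := hg1
      obtain ⟨s', hs', hg2s'⟩ := hg2
      rcases hchain.total hs hs' with hss | hss
      · exact hcS hs' g1 g2 (hss hg1s) hg2s' hder
      · exact hcS hs g1 g2 hg1s (hss hg2s') hder) Y hY
  -- X is a maximal possible set; show it is a type
  have hXp : IsPossible X := hXmax.1
  have hmax : ∀ Z : Set (NesTerm U I), IsPossible Z → X ⊆ Z → Z ⊆ X :=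
    fun Z hZ hXZ => hXmax.2 hZ hXZ
  -- auxiliary: if insert g X is possible then g ∈ X
  have hins : ∀ g : NesTerm U I, IsPossible (insert g X) → g ∈ X := by
    intro g hposs
    exact hmax _ hposs (Set.subset_insert _ _) (Set.mem_insert _ _)
  -- from ¬ possible (insert g X), extract a witness in X
  have hwit : ∀ g : NesTerm U I, ¬ IsPossible (insert g X) →
      ∃ c ∈ X, TNes (∅ : Set (NesForm U I)) (.all c (.neg g)) := by
    intro g hnp
    by_contra hno
    push_neg at hno
    apply hnp
    intro a b ha hb hder
    rw [Set.mem_insert_iff] at ha hb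
    obtain rfl | ha := ha
    all_goals obtain rfl | hb := hb
    · exact not_all_neg_self _ hder
    · exact hno b hb (TNes.flip hder)
    · exact hno a ha hder
    · exact hXp a b ha hb hder
  refine ⟨X, hYX, ?_, ?_, ?_⟩
  · -- closure
    intro g1 g2 hg1 hder
    apply hins
    intro a b ha hb hab
    rw [Set.mem_insert_iff] at ha hb
    obtain rfl | ha := ha
    all_goals obtain rfl | hb := hb
    · exact not_all_neg_self _ hab
    · exact hXp g1 b hg1 hb (NesDer.barbara hder hab)
    · have hfl := TNes.flip hab
      exact hXp g1 a hg1 ha (NesDer.barbara hder hfl)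
    · exact hXp a b ha hb hab
  · -- completeness
    intro g
    by_contra hcon
    push_neg at hcon
    obtain ⟨hg, hng⟩ := hcon
    obtain ⟨c, hc, hcder⟩ := hwit g (fun hp => hg (hins g hp))
    obtain ⟨d, hd, hdder⟩ := hwit (.neg g) (fun hp => hng (hins _ hp))
    -- hcder : all c ¬g ; hdder : all d ¬¬g
    have h1 : TNes (∅ : Set (NesForm U I)) (.all (.neg (.neg g)) (.neg c)) :=
      TNes.contrap hcder
    exact hXp d c hd hc (NesDer.barbara hdder h1)
  · -- consistency
    intro g ⟨hg, hng⟩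
    exact hXp g (.neg g) hg hng (NesDer.dni g)

end Aux

/-- Existence Lemma for the canonical model for existential formulas. -/
theorem existence_lemma_E (U I : Type) [Countable U]
    (w : WE U I) (m : ℕ) (i : I) (t : NesTerm U I)
    (h : NesTerm.neg (.know i t) ∈ (w m).1) :
    ∃ w' : WE U I, RE i w w' ∧ NesTerm.neg t ∈ (w' m).1 := by
  classical
  -- the set of terms forced at coordinate n
  set Y : ℕ → Set (NesTerm U I) := fun n => {g | NesTerm.know i g ∈ (w n).1} with hY
  -- Y n is possible for every n
  have hYposs : ∀ n, IsPossible (Y n) := by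
    intro n g1 g2 hg1 hg2 hder
    have hk : TNes (∅ : Set (NesForm U I))
        (.all (.know i g1) (.know i (.neg g2))) := NesDer.kRule i hder
    have h1 : NesTerm.know i (.neg g2) ∈ (w n).1 := (w n).2.1 _ _ hg1 hk
    have h2 : NesTerm.neg g2 ∈ (w n).1 := (w n).2.1 _ _ h1 (NesDer.tAx i (.neg g2))
    have h3 : g2 ∈ (w n).1 := (w n).2.1 _ _ hg2 (NesDer.tAx i g2)
    exact (w n).2.2.2 g2 ⟨h3, h2⟩
  -- no member of Y m provably implies t
  have hnot : ∀ g ∈ Y m, ¬ TNes (∅ : Set (NesForm U I)) (.all g t) := by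
    intro g hg hder
    have hk : TNes (∅ : Set (NesForm U I))
        (.all (.know i g) (.know i t)) := NesDer.kRule i hder
    have h1 : NesTerm.know i t ∈ (w m).1 := (w m).2.1 _ _ hg hk
    exact (w m).2.2.2 _ ⟨h1, h⟩
  -- the set to realize at each coordinate
  set Z : ℕ → Set (NesTerm U I) :=
    fun n => if n = m then insert (NesTerm.neg t) (Y n) else Y n with hZ
  have hZposs : ∀ n, IsPossible (Z n) := by
    intro n
    by_cases hnm : n = m
    · subst hnm
      simp only [hZ, if_pos rfl]
      intro g1 g2 hg1 hg2 hder
      rw [Set.mem_insert_iff] at hg1 hg2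
      obtain rfl | h1 := hg1
      all_goals obtain rfl | h2 := hg2
      · exact not_all_neg_self _ hder
      · -- g1 = ¬t, g2 ∈ Y n : all ¬t ¬g2 → all g2 t
        have hf : TNes (∅ : Set (NesForm U I)) (.all g2 (.neg (.neg t))) :=
          TNes.flip hder
        exact hnot g2 h2 (NesDer.barbara hf (NesDer.dne t))
      · -- g1 ∈ Y n, g2 = ¬t : all g1 ¬¬t → all g1 t
        exact hnot g1 h1 (NesDer.barbara hder (NesDer.dne t))
      · exact hYposs _ g1 g2 h1 h2 hder
    · simpa only [hZ, if_neg hnm] using hYposs n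
  -- extend each Z n to a type
  have hext : ∀ n, ∃ X : Set (NesTerm U I), Z n ⊆ X ∧ IsType X :=
    fun n => exists_type_ext (hZposs n)
  choose X hXsub hXtype using hext
  refine ⟨fun n => ⟨X n, hXtype n⟩, ?_, ?_⟩
  · intro n g hg
    have hgY : g ∈ Y n := hg
    have hgZ : g ∈ Z n := by
      by_cases hnm : n = m
      · subst hnm; simp only [hZ, if_pos rfl]; exact Set.mem_insert_of_mem _ hgY
      · simpa only [hZ, if_neg hnm] using hgY
    exact hXsub n hgZ
  · have : NesTerm.neg t ∈ Z m := by
      simp only [hZ, if_pos rfl]; exact Set.mem_insert _ _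
    exact hXsub m this
end

section
/- Existence Lemma for the canonical model of T_NES: for every world w of M*, every m ∈ ℕ, every agent i, and every term t such that ¬K_i t ∈ w(m), there exists a world w' of M* such that w R*_i w' and ¬t ∈ w'(m). -/
/-- A set of L_NES formulas is consistent (in the system with extra axioms `extra`)
if no formula and its negation are both derivable from it. -/
def ConsistentIn {U I : Type} (extra : Set (NesForm U I)) (Γ : Set (NesForm U I)) : Prop :=
  ¬ ∃ ψ : NesForm U I, NesDer extra Γ ψ ∧ NesDer extra Γ ψ.negf

/-- Consistency in T_NES. -/
def Consistent {U I : Type} (Γ : Set (NesForm U I)) : Prop :=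
  ConsistentIn ∅ Γ

/-- A maximal consistent set (w.r.t. T_NES): consistent, and no proper superset
is consistent. -/
def IsMCS {U I : Type} (Δ : Set (NesForm U I)) : Prop :=
  Consistent Δ ∧ ∀ Γ : Set (NesForm U I), Δ ⊆ Γ → Consistent Γ → Γ = Δ

/-- A Δ-type: a set X of terms that respects Barbara relative to Δ, and contains
exactly one of g, ¬g for every term g. -/
def IsDeltaType {U I : Type} (Δ : Set (NesForm U I)) (X : Set (NesTerm U I)) : Prop :=
  (∀ g1 g2 : NesTerm U I, g1 ∈ X → TNes Δ (.all g1 g2) → g2 ∈ X) ∧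
  (∀ g : NesTerm U I, g ∈ X ∨ NesTerm.neg g ∈ X) ∧
  (∀ g : NesTerm U I, ¬ (g ∈ X ∧ NesTerm.neg g ∈ X))

/-- Worlds of the canonical model for T_NES: pairs of an MCS Δ and a map from ℕ
to Δ-types. We write `w.f n` for `w(n)`. -/
structure CanonW (U I : Type) where
  Δ : Set (NesForm U I)
  f : ℕ → Set (NesTerm U I)
  mcs : IsMCS Δ
  htype : ∀ n : ℕ, IsDeltaType Δ (f n)

/-- Accessibility in the canonical model for T_NES:
w R*_i w' iff K_i g ∈ w(n) implies g ∈ w'(n), for all n and g. -/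
def RStar {U I : Type} (i : I) (w w' : CanonW U I) : Prop :=
  ∀ (n : ℕ) (g : NesTerm U I), NesTerm.know i g ∈ w.f n → g ∈ w'.f n

section NesAux

variable {U I : Type}

/-- Weakening / monotonicity of derivability in the premise set. -/
lemma nesDer_mono {E : Set (NesForm U I)} :
    ∀ {Γ φ}, NesDer E Γ φ → ∀ {Γ' : Set (NesForm U I)}, Γ ⊆ Γ' → NesDer E Γ' φ := by
  intro Γ φ h
  induction h with
  | prem hφ => intro Γ' hs; exact .prem (hs hφ)
  | extraAx hφ => intro Γ' hs; exact .extraAx hφ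
  | allSelf g => intro Γ' hs; exact .allSelf g
  | tAx i g => intro Γ' hs; exact .tAx i g
  | dni g => intro Γ' hs; exact .dni g
  | dne g => intro Γ' hs; exact .dne g
  | barbara h1 h2 ih1 ih2 => intro Γ' hs; exact .barbara (ih1 hs) (ih2 hs)
  | conv h ih => intro Γ' hs; exact .conv (ih hs)
  | exist h ih => intro Γ' hs; exact .exist (ih hs)
  | nonEmpty h ih => intro Γ' hs; exact .nonEmpty (ih hs)
  | raa h1 h2 ih1 ih2 =>
      intro Γ' hs
      exact .raa (ih1 (Set.insert_subset_insert hs)) (ih2 (Set.insert_subset_insert hs))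
  | kRule i h ih => intro Γ' hs; exact .kRule i h

/-- Contraposition is derivable in T_NES. -/
lemma nesContrapos {Γ : Set (NesForm U I)} {a c : NesTerm U I}
    (h : NesDer (∅ : Set (NesForm U I)) Γ (.all a c)) :
    NesDer (∅ : Set (NesForm U I)) Γ (.all (.neg c) (.neg a)) := by
  have h1 : NesDer (∅ : Set (NesForm U I)) (insert (NesForm.ex (.neg c) a) Γ)
      (NesForm.ex a (.neg c)) := .conv (.prem (Set.mem_insert _ _))
  have h2 : NesDer (∅ : Set (NesForm U I)) (insert (NesForm.ex (.neg c) a) Γ)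
      (NesForm.all a (.neg (.neg c))) :=
    .barbara (nesDer_mono h (Set.subset_insert _ _)) (.dni c)
  exact NesDer.raa (φ := NesForm.ex (.neg c) a) (ψ := NesForm.ex a (.neg c)) h1 h2

/-- Structural entailment between terms (sound for T-validity). -/
inductive NesImp : NesTerm U I → NesTerm U I → Prop
  | refl (g : NesTerm U I) : NesImp g g
  | trans {a b c} : NesImp a b → NesImp b c → NesImp a c
  | t (j : I) (g : NesTerm U I) : NesImp (.know j g) g
  | dni (g : NesTerm U I) : NesImp g (.neg (.neg g))
  | dne (g : NesTerm U I) : NesImp (.neg (.neg g)) g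
  | mono (j : I) {a b} : NesImp a b → NesImp (.know j a) (.know j b)
  | anti {a b} : NesImp a b → NesImp (.neg b) (.neg a)

/-- The parity valuation: homomorphic Boolean valuation of terms. -/
def nesPar (b : Bool) : NesTerm U I → Bool
  | .base _ => b
  | .know _ g => nesPar b g
  | .neg g => !(nesPar b g)

lemma nesPar_true (g : NesTerm U I) : nesPar true g = !nesPar false g := by
  induction g with
  | base A => simp [nesPar]
  | know j g ih => simpa [nesPar] using ih
  | neg g ih => simp [nesPar, ih]

lemma exists_nesPar_false (g : NesTerm U I) : ∃ b, nesPar b g = false := by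
  cases hb : nesPar false g
  · exact ⟨false, hb⟩
  · exact ⟨true, by simp [nesPar_true, hb]⟩

lemma nesImp_par {a c : NesTerm U I} (h : NesImp a c) :
    ∀ b, nesPar b a = true → nesPar b c = true := by
  induction h with
  | refl g => exact fun _ => id
  | trans h1 h2 ih1 ih2 => exact fun b hb => ih2 b (ih1 b hb)
  | t j g => intro b hb; simpa [nesPar] using hb
  | dni g => intro b hb; simpa [nesPar] using hb
  | dne g => intro b hb; simpa [nesPar] using hb
  | mono j h ih => intro b hb; simp only [nesPar] at hb ⊢; exact ih b hb
  | anti h ih =>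
      intro b hb
      simp only [nesPar, Bool.not_eq_true'] at hb ⊢
      cases hx : nesPar b _ with
      | false => rfl
      | true => rw [ih b hx] at hb; exact hb

/-- Structural entailment yields theorems of T_NES. -/
lemma nesImp_der {a c : NesTerm U I} (h : NesImp a c) :
    NesDer (∅ : Set (NesForm U I)) (∅ : Set (NesForm U I)) (.all a c) := by
  induction h with
  | refl g => exact .allSelf g
  | trans h1 h2 ih1 ih2 => exact .barbara ih1 ih2
  | t j g => exact .tAx j g
  | dni g => exact .dni g
  | dne g => exact .dne g
  | mono j h ih => exact .kRule j ih
  | anti h ih => exact nesContrapos ih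

end NesAux

/-- Coherent Boolean valuations: worlds of the countermodel. -/
def CohW (U I : Type) :=
  {v : ℕ → NesTerm U I → Bool //
    (∀ n g, v n (NesTerm.neg g) = !v n g) ∧
    (∀ n a c, NesImp a c → v n a = true → v n c = true)}

/-- The model of coherent Boolean valuations. -/
def CohM (U I : Type) : NesModel U I where
  W := CohW U I
  R := fun j v v' => ∀ n c, v.1 n (NesTerm.know j c) = true → v'.1 n c = true
  D := ℕ
  dNonempty := ⟨0⟩
  val := fun v A => {n | v.1 n (NesTerm.base A) = true}

section NesModelAux

variable {U I : Type}

lemma cohM_isT : (CohM U I).IsT := by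
  intro j v n c hc
  exact v.2.2 n _ _ (NesImp.t j c) hc

/-- Building a coherent valuation from a conflict-free family of requirements. -/
lemma nesBuild (Up : ℕ → Set (NesTerm U I))
    (hup : ∀ n a c, a ∈ Up n → NesImp a c → c ∈ Up n)
    (hcon : ∀ n a, a ∈ Up n → NesTerm.neg a ∈ Up n → False) :
    ∃ v : CohW U I, ∀ n a,
      (a ∈ Up n → v.1 n a = true) ∧ (NesTerm.neg a ∈ Up n → v.1 n a = false) := by
  classical
  refine ⟨⟨fun n d =>
      if d ∈ Up n then true else if NesTerm.neg d ∈ Up n then false else nesPar true d,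
      ?_, ?_⟩, ?_⟩
  · intro n g
    by_cases h1 : g ∈ Up n
    · have h2 : NesTerm.neg g ∉ Up n := fun hc => hcon n g h1 hc
      have h3 : NesTerm.neg (NesTerm.neg g) ∈ Up n := hup n g _ h1 (NesImp.dni g)
      simp [h1, h2, h3]
    · by_cases h2 : NesTerm.neg g ∈ Up n
      · simp [h1, h2]
      · have h3 : NesTerm.neg (NesTerm.neg g) ∉ Up n :=
          fun hc => h1 (hup n _ _ hc (NesImp.dne g))
        simp [h1, h2, h3, nesPar]
  · intro n a c himp ha
    by_cases h1 : a ∈ Up n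
    · simp [hup n a c h1 himp]
    · by_cases h2 : NesTerm.neg a ∈ Up n
      · simp [h1, h2] at ha
      · replace ha : nesPar true a = true := by simpa [h1, h2] using ha
        by_cases h3 : c ∈ Up n
        · simp [h3]
        · have h4 : NesTerm.neg c ∉ Up n :=
            fun hc => h2 (hup n _ _ hc (NesImp.anti himp))
          simp [h3, h4, nesImp_par himp true ha]
  · intro n a
    constructor
    · intro ha; simp [ha]
    · intro hna
      have h1 : a ∉ Up n := fun hc => hcon n a hc hna
      simp [h1, hna]

/-- Existence of accessible falsifying valuations. -/
lemma cohM_succ (v : CohW U I) (j : I) (n : ℕ) (g : NesTerm U I)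
    (hg : v.1 n (NesTerm.know j g) = false) :
    ∃ v' : CohW U I,
      (∀ k c, v.1 k (NesTerm.know j c) = true → v'.1 k c = true) ∧ v'.1 n g = false := by
  classical
  set Up : ℕ → Set (NesTerm U I) := fun k =>
    {d | (∃ c, v.1 k (NesTerm.know j c) = true ∧ NesImp c d) ∨
      (k = n ∧ NesImp (NesTerm.neg g) d)} with hUpdef
  have hup : ∀ k a c, a ∈ Up k → NesImp a c → c ∈ Up k := by
    rintro k a c (⟨c₁, hc₁, h1⟩ | ⟨hk, h1⟩) h2
    · exact Or.inl ⟨c₁, hc₁, h1.trans h2⟩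
    · exact Or.inr ⟨hk, h1.trans h2⟩
  have hcon : ∀ k a, a ∈ Up k → NesTerm.neg a ∈ Up k → False := by
    rintro k a (⟨c₁, hc₁, h1⟩ | ⟨hk, h1⟩) (⟨c₂, hc₂, h2⟩ | ⟨hk2, h2⟩)
    · have h3 : NesImp c₂ (NesTerm.neg c₁) := h2.trans (NesImp.anti h1)
      have h5 : v.1 k (NesTerm.know j (NesTerm.neg c₁)) = true :=
        v.2.2 k _ _ (NesImp.mono j h3) hc₂
      have h6 : v.1 k (NesTerm.neg c₁) = true := v.2.2 k _ _ (NesImp.t j _) h5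
      have h7 : v.1 k c₁ = true := v.2.2 k _ _ (NesImp.t j _) hc₁
      rw [v.2.1 k c₁, h7] at h6
      simp at h6
    · -- a from K-side, neg a from seed
      subst hk2
      have h3 : NesImp c₁ g :=
        h1.trans ((NesImp.dni a).trans ((NesImp.anti h2).trans (NesImp.dne g)))
      have h5 : v.1 k (NesTerm.know j g) = true :=
        v.2.2 k _ _ (NesImp.mono j h3) hc₁
      rw [hg] at h5; simp at h5
    · -- a from seed (k = n), neg a from K-side
      subst hk
      have h3 : NesImp c₂ g := h2.trans ((NesImp.anti h1).trans (NesImp.dne g))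
      have h5 : v.1 k (NesTerm.know j g) = true :=
        v.2.2 k _ _ (NesImp.mono j h3) hc₂
      rw [hg] at h5; simp at h5
    · -- both from seed
      have h3 : NesImp (NesTerm.neg g) (NesTerm.neg (NesTerm.neg g)) :=
        h2.trans (NesImp.anti h1)
      obtain ⟨b, hb⟩ := exists_nesPar_false g
      have h4 := nesImp_par h3 b (by simp [nesPar, hb])
      simp [nesPar, hb] at h4
  obtain ⟨v', hv'⟩ := nesBuild Up hup hcon
  refine ⟨v', fun k c hc => (hv' k c).1 (Or.inl ⟨c, hc, NesImp.refl c⟩), ?_⟩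
  exact (hv' n g).2 (Or.inr ⟨rfl, NesImp.refl _⟩)

/-- Truth lemma for the coherent-valuation model. -/
lemma cohM_truth (g : NesTerm U I) : ∀ (v : CohW U I) (n : ℕ),
    n ∈ (CohM U I).interp v g ↔ v.1 n g = true := by
  induction g with
  | base A => intro v n; exact Iff.rfl
  | know j g ih =>
      intro v n
      constructor
      · intro hmem
        by_contra hne
        have hgf : v.1 n (NesTerm.know j g) = false := by
          cases hx : v.1 n (NesTerm.know j g)
          · rfl
          · exact absurd hx hne
        obtain ⟨v', hR, hfalse⟩ := cohM_succ v j n g hgf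
        have hmem2 : ∀ v' : CohW U I, (CohM U I).R j v v' →
            n ∈ (CohM U I).interp v' g := hmem
        have := (ih v' n).1 (hmem2 v' hR)
        rw [this] at hfalse
        simp at hfalse
      · intro htrue
        intro v' hR
        exact (ih v' n).2 (hR n g htrue)
  | neg g ih =>
      intro v n
      have h1 : (n ∈ (CohM U I).interp v (NesTerm.neg g)) ↔
          ¬ (n ∈ (CohM U I).interp v g) := Iff.rfl
      rw [h1, ih v n, v.2.1 n g]
      simp

end NesModelAux

section NesSound

variable {U I : Type}

lemma nesSat_negf_false {M : NesModel U I} {w : M.W} {φ : NesForm U I}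
    (h1 : M.sat w φ) (h2 : M.sat w φ.negf) : False := by
  cases φ with
  | all g1 g2 =>
      obtain ⟨d, hd1, hd2⟩ := h2
      exact hd2 (h1 hd1)
  | ex g1 g2 =>
      obtain ⟨d, hd1, hd2⟩ := h1
      exact h2 hd1 hd2

lemma nesNot_sat_negf {M : NesModel U I} {w : M.W} {φ : NesForm U I}
    (h : ¬ M.sat w φ) : M.sat w φ.negf := by
  cases φ with
  | all g1 g2 =>
      obtain ⟨d, hd1, hd2⟩ := Set.not_subset.mp h
      exact ⟨d, hd1, hd2⟩
  | ex g1 g2 =>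
      intro d hd hd2
      exact h ⟨d, hd, hd2⟩

/-- Soundness of T_NES with respect to reflexive models. -/
lemma nesSound : ∀ {Γ : Set (NesForm U I)} {φ : NesForm U I},
    NesDer (∅ : Set (NesForm U I)) Γ φ →
    ∀ (M : NesModel U I), M.IsT → ∀ w, M.satSet w Γ → M.sat w φ := by
  intro Γ φ h
  induction h with
  | prem hφ => intro M hT w hw; exact hw _ hφ
  | extraAx hφ => exact absurd hφ (Set.notMem_empty _)
  | allSelf g => intro M hT w hw d hd; exact hd
  | tAx i g => intro M hT w hw d hd; exact hd w (hT i w)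
  | dni g => intro M hT w hw d hd; intro hc; exact hc hd
  | dne g =>
      intro M hT w hw d hd
      by_contra hc
      exact (hd hc).elim
  | barbara h1 h2 ih1 ih2 =>
      intro M hT w hw d hd
      exact ih2 M hT w hw (ih1 M hT w hw hd)
  | conv h ih =>
      intro M hT w hw
      obtain ⟨d, hd1, hd2⟩ := ih M hT w hw
      exact ⟨d, hd2, hd1⟩
  | exist h ih =>
      intro M hT w hw
      obtain ⟨d, hd1, _⟩ := ih M hT w hw
      exact ⟨d, hd1, hd1⟩
  | nonEmpty h ih =>
      intro M hT w hw
      have hsub := ih M hT w hw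
      obtain ⟨d⟩ := M.dNonempty
      have hd : d ∈ (M.interp w _)ᶜ := fun hd => hsub hd hd
      exact ⟨d, hd, hd⟩
  | @raa Γ φ ψ h1 h2 ih1 ih2 =>
      intro M hT w hw
      by_cases hφ : M.sat w φ
      · have hw' : M.satSet w (insert φ Γ) := by
          intro χ hχ
          rcases hχ with rfl | hχ
          · exact hφ
          · exact hw _ hχ
        exact (nesSat_negf_false (ih1 M hT w hw') (ih2 M hT w hw')).elim
      · exact nesNot_sat_negf hφ
  | @kRule Γ g1 g2 i hprem ih =>
      intro M hT w hw d hd v hR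
      have hval := ih M hT v (fun ψ hψ => absurd hψ (Set.notMem_empty _))
      exact hval (hd v hR)

end NesSound
/-- Existence Lemma for the canonical model of T_NES. -/
theorem existence_lemma_star (U I : Type) [Countable U]
    (w : CanonW U I) (m : ℕ) (i : I) (t : NesTerm U I)
    (h : NesTerm.neg (.know i t) ∈ w.f m) :
    ∃ w' : CanonW U I, RStar i w w' ∧ NesTerm.neg t ∈ w'.f m := by
  classical
  -- requirement sets
  set Up : ℕ → Set (NesTerm U I) := fun k =>
    {d | (∃ c, NesTerm.know i c ∈ w.f k ∧ NesImp c d) ∨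
      (k = m ∧ NesImp (NesTerm.neg t) d)} with hUpdef
  have hup : ∀ k a c, a ∈ Up k → NesImp a c → c ∈ Up k := by
    rintro k a c (⟨c₁, hc₁, h1⟩ | ⟨hk, h1⟩) h2
    · exact Or.inl ⟨c₁, hc₁, h1.trans h2⟩
    · exact Or.inr ⟨hk, h1.trans h2⟩
  have hcon : ∀ k a, a ∈ Up k → NesTerm.neg a ∈ Up k → False := by
    rintro k a (⟨c₁, hc₁, h1⟩ | ⟨hk, h1⟩) (⟨c₂, hc₂, h2⟩ | ⟨hk2, h2⟩)
    · -- both from K-side: contradiction inside the Δ-type w.f k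
      have h3 : NesImp c₂ (NesTerm.neg c₁) := h2.trans (NesImp.anti h1)
      have d1 : NesDer (∅ : Set (NesForm U I)) (∅ : Set (NesForm U I))
          (.all (.know i c₂) (.neg c₁)) :=
        .barbara (.kRule i (nesImp_der h3)) (.tAx i _)
      have hneg : NesTerm.neg c₁ ∈ w.f k :=
        (w.htype k).1 _ _ hc₂ (nesDer_mono d1 (Set.empty_subset _))
      have hpos : c₁ ∈ w.f k :=
        (w.htype k).1 _ _ hc₁ (nesDer_mono (NesDer.tAx i c₁) (Set.empty_subset _))
      exact (w.htype k).2.2 c₁ ⟨hpos, hneg⟩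
    · -- K-side against the seed ¬t
      subst hk2
      have h3 : NesImp c₁ t :=
        h1.trans ((NesImp.dni a).trans ((NesImp.anti h2).trans (NesImp.dne t)))
      have hKt : NesTerm.know i t ∈ w.f k :=
        (w.htype k).1 _ _ hc₁
          (nesDer_mono (NesDer.kRule i (nesImp_der h3)) (Set.empty_subset _))
      exact (w.htype k).2.2 _ ⟨hKt, h⟩
    · -- seed against K-side
      subst hk
      have h3 : NesImp c₂ t := h2.trans ((NesImp.anti h1).trans (NesImp.dne t))
      have hKt : NesTerm.know i t ∈ w.f k :=
        (w.htype k).1 _ _ hc₂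
          (nesDer_mono (NesDer.kRule i (nesImp_der h3)) (Set.empty_subset _))
      exact (w.htype k).2.2 _ ⟨hKt, h⟩
    · -- both from the seed
      have h3 : NesImp (NesTerm.neg t) (NesTerm.neg (NesTerm.neg t)) :=
        h2.trans (NesImp.anti h1)
      obtain ⟨b, hb⟩ := exists_nesPar_false t
      have h4 := nesImp_par h3 b (by simp [nesPar, hb])
      simp [nesPar, hb] at h4
  obtain ⟨u, hu⟩ := nesBuild Up hup hcon
  -- the new canonical world, extracted from the pointed model (CohM, u)
  have hsatset : (CohM U I).satSet u {φ | (CohM U I).sat u φ} := fun φ hφ => hφ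
  have hmcs : IsMCS {φ | (CohM U I).sat u φ} := by
    constructor
    · rintro ⟨ψ, h1, h2⟩
      exact nesSat_negf_false (nesSound h1 (CohM U I) cohM_isT u hsatset)
        (nesSound h2 (CohM U I) cohM_isT u hsatset)
    · intro Γ hsub hconsis
      refine Set.Subset.antisymm ?_ hsub
      intro φ hφ
      by_contra hnot
      have hneg : (CohM U I).sat u φ.negf := nesNot_sat_negf hnot
      exact hconsis ⟨φ, NesDer.prem hφ, NesDer.prem (hsub hneg)⟩
  have htypes : ∀ n : ℕ, IsDeltaType {φ | (CohM U I).sat u φ} {g | u.1 n g = true} := by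
    intro n
    refine ⟨?_, ?_, ?_⟩
    · intro g1 g2 hg1 hder
      have hs : (CohM U I).sat u (.all g1 g2) :=
        nesSound hder (CohM U I) cohM_isT u hsatset
      exact (cohM_truth g2 u n).1 (hs ((cohM_truth g1 u n).2 hg1))
    · intro g
      cases hx : u.1 n g
      · right
        have := u.2.1 n g
        rw [hx] at this
        simpa using this
      · left; exact hx
    · rintro g ⟨h1, h2⟩
      have := u.2.1 n g
      rw [h1, h2] at this
      simp at this
  refine ⟨⟨{φ | (CohM U I).sat u φ}, fun n => {g | u.1 n g = true}, hmcs, htypes⟩, ?_, ?_⟩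
  · intro n g hg
    exact (hu n g).1 (Or.inl ⟨g, hg, NesImp.refl g⟩)
  · show u.1 m (NesTerm.neg t) = true
    have hmem : NesTerm.neg t ∈ Up m := Or.inr ⟨rfl, NesImp.refl _⟩
    have h1 : u.1 m t = false := (hu m t).2 hmem
    have := u.2.1 m t
    rw [h1] at this
    simpa using this
end
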